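/- arXiv:0903.1164 — 3 statements merged into one kernel-verified Lean document; each statement's English description precedes it below -/
import Mathlib

section
/- Under the hypotheses on (v₁,…,v_d; λ₁,…,λ_d; c; a) stated in the context, the function g₀ satisfies the growth condition (∗) with data (v₁,…,vₙ; a₁,…,aₙ). -/
open Filter

noncomputable section

/-- First directional derivative of `g` at `x` in direction `w`. -/
def pd1 {n : ℕ} (g : (Fin n → ℝ) → ℝ) (x w : Fin n → ℝ) : ℝ :=
  fderiv ℝ g x w

/-- Second derivative (Hessian bilinear form) of `g` at `x` applied to `w₁, w₂`. -/
def pd2 {n : ℕ} (g : (Fin n → ℝ) → ℝ) (x w₁ w₂ : Fin n → ℝ) : ℝ :=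
  fderiv ℝ (fun y => fderiv ℝ g y w₁) x w₂

/-- `ξ(t) = t₁ v₁ + ⋯ + tₙ vₙ`. -/
def xi {n : ℕ} (v : Fin n → (Fin n → ℝ)) (t : Fin n → ℝ) : Fin n → ℝ :=
  ∑ m, t m • v m

/-- The growth condition (∗) with data `(v₁,…,vₙ; a₁,…,aₙ)`. -/
def GrowthCondition {n : ℕ} (v : Fin n → (Fin n → ℝ)) (a : Fin n → ℝ)
    (g : (Fin n → ℝ) → ℝ) : Prop :=
  (∀ j : Fin n, ∀ t : Fin n → ℝ, ∃ L : ℝ,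
    Tendsto (fun s : ℝ =>
        2 * Real.exp (-2 * s) * (pd1 g (xi v (Function.update t j s)) (v j) + a j))
      atBot (nhds L) ∧
    Tendsto (fun s : ℝ =>
        Real.exp (-2 * s) * pd2 g (xi v (Function.update t j s)) (v j) (v j))
      atBot (nhds L)) ∧
  (∀ j k l : Fin n, ∀ t : Fin n → ℝ, ∃ L : ℝ,
    Tendsto (fun s : ℝ => pd2 g (xi v (Function.update t l s)) (v j) (v k))
      atBot (nhds L)) ∧
  (∀ j k : Fin n, j ≠ k → ∀ t : Fin n → ℝ,
    Tendsto (fun s : ℝ =>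
        Real.exp (-s - t k) * pd2 g (xi v (Function.update t j s)) (v j) (v k))
      atBot (nhds 0) ∧
    Tendsto (fun s : ℝ =>
        Real.exp (-(t j) - s) * pd2 g (xi v (Function.update t k s)) (v j) (v k))
      atBot (nhds 0))

/-- The affine-linear function `lᵢ(u) = ⟨u,vᵢ⟩ + λᵢ` (integer version). -/
def lfun {n d : ℕ} (v : Fin d → Fin n → ℤ) (lam : Fin d → ℤ) (i : Fin d)
    (u : Fin n → ℤ) : ℤ :=
  (∑ j, u j * v i j) + lam i

/-- The affine-linear function `lᵢ(x) = ⟨x,vᵢ⟩ + λᵢ` (real version). -/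
def lfunR {n d : ℕ} (v : Fin d → Fin n → ℤ) (lam : Fin d → ℤ) (i : Fin d)
    (x : Fin n → ℝ) : ℝ :=
  (∑ j, x j * (v i j : ℝ)) + (lam i : ℝ)

/-- Guillemin's potential
`g₀(ξ) = -(1/2) Σᵢ aᵢ log( (Σ_{u∈S} c_u lᵢ(u) e^{2⟨u,ξ⟩}) / (Σ_{u∈S} c_u e^{2⟨u,ξ⟩}) )`. -/
def gzero {n d : ℕ} (v : Fin d → Fin n → ℤ) (lam : Fin d → ℤ)
    (S : Finset (Fin n → ℤ)) (c : (Fin n → ℤ) → ℝ) (a : Fin d → ℤ)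
    (ξ : Fin n → ℝ) : ℝ :=
  -(1/2) * ∑ i : Fin d, (a i : ℝ) *
    Real.log ((∑ u ∈ S, c u * (lfun v lam i u : ℝ) * Real.exp (2 * ∑ m, (u m : ℝ) * ξ m)) /
      (∑ u ∈ S, c u * Real.exp (2 * ∑ m, (u m : ℝ) * ξ m)))

open Real Finset Polynomial Topology

/-!
Fix a direction `j`, freeze all coordinates of `t` but `tⱼ = s`, and put `q = e^{2s}`. Since
`⟨u, vⱼ⟩ = lⱼ(u) - λⱼ`, every sum `Σ_{u∈S} b_u e^{2⟨u,ξ(t)⟩}` equals `e^{2s(m - λⱼ)} P_b(q)` for a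
polynomial `P_b` (`linePoly`), where `m` is the least value of `lⱼ` on the support of `b`, so that
`P_b(0) > 0` (`IsLowestLevel`). The points `u₀, …, uₙ` show that this level is `1` for the weight
`c_u lⱼ(u)` and `0` for `c_u` and for `c_u lᵢ(u)`, `i ≠ j`.

The first and second derivatives of `g₀` are combinations of the gradient and Hessian of
`log Σ_u b_u e^{2⟨u,ξ⟩}`, in which the factors `e^{2s(m - λⱼ)}` cancel: along the line they are
rational functions of `q`, regular at `q = 0`, and `s → -∞` means `q → 0`. This gives (2).
Differentiating in the direction `vⱼ` acts on `P_b` as `2(q d/dq + m - λⱼ)` (`linePoly_dirWeight`).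
Hence every Hessian entry involving `vⱼ` carries a factor `q`, which gives (3), and
`⟨∇g₀, vⱼ⟩ + aⱼ = O(q)`; both quantities in (1) tend to
`-2 Σᵢ aᵢ (P_{bᵢ}'(0)/P_{bᵢ}(0) - P_c'(0)/P_c(0))`, where `bᵢ(u) = c_u lᵢ(u)`.
-/

lemma X_mul_derivative_C_mul_X_pow {R : Type*} [CommSemiring R] (a : R) (k : ℕ) :
    X * derivative (C a * X ^ k) = C (a * k) * X ^ k := by
  rw [derivative_C_mul_X_pow]
  cases k with
  | zero => simp
  | succ k => rw [Nat.add_sub_cancel, pow_succ]; ring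

lemma tendsto_eval_exp_two_mul_atBot (P : ℝ[X]) :
    Tendsto (fun s => P.eval (exp (2 * s))) atBot (𝓝 (P.eval 0)) :=
  (P.continuous.tendsto 0).comp
    (tendsto_exp_atBot.comp (tendsto_id.const_mul_atBot two_pos))

lemma tendsto_eval_div_eval_exp_two_mul_atBot (N : ℝ[X]) {D : ℝ[X]} (hD : D.eval 0 ≠ 0) :
    Tendsto (fun s => N.eval (exp (2 * s)) / D.eval (exp (2 * s))) atBot
      (𝓝 (N.eval 0 / D.eval 0)) :=
  (tendsto_eval_exp_two_mul_atBot N).div (tendsto_eval_exp_two_mul_atBot D) hD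

lemma fderiv_sum_mul_sub_apply {E : Type*} [NormedAddCommGroup E] [NormedSpace ℝ E] {ι : Type*}
    (s : Finset ι) (κ : ι → ℝ) {f : ι → E → ℝ} {f₀ : E → ℝ} {x : E}
    (hf : ∀ i, DifferentiableAt ℝ (f i) x) (hf₀ : DifferentiableAt ℝ f₀ x) (w : E) :
    fderiv ℝ (fun y => ∑ i ∈ s, κ i * (f i y - f₀ y)) x w
      = ∑ i ∈ s, κ i * (fderiv ℝ (f i) x w - fderiv ℝ f₀ x w) := by
  have h := HasFDerivAt.fun_sum fun i (_ : i ∈ s) =>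
    (((hf i).hasFDerivAt.fun_sub hf₀.hasFDerivAt).const_mul (κ i))
  rw [h.fderiv]
  simp

namespace GuilleminPotential

section ExpSum

variable {n : ℕ}

def zdot (u : Fin n → ℤ) (x : Fin n → ℝ) : ℝ := ∑ m, (u m : ℝ) * x m

lemma zdot_add_smul (u : Fin n → ℤ) (x w : Fin n → ℝ) (s : ℝ) :
    zdot u (x + s • w) = zdot u x + s * zdot u w := by
  simp only [zdot, Pi.add_apply, Pi.smul_apply, smul_eq_mul, mul_add, sum_add_distrib,
    mul_sum]
  congr 1
  exact sum_congr rfl fun _ _ => by ring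

def expSum (S : Finset (Fin n → ℤ)) (b : (Fin n → ℤ) → ℝ) (x : Fin n → ℝ) : ℝ :=
  ∑ u ∈ S, b u * exp (2 * zdot u x)

def dirWeight (b : (Fin n → ℤ) → ℝ) (w : Fin n → ℝ) (u : Fin n → ℤ) : ℝ :=
  2 * zdot u w * b u

def gradLog (S : Finset (Fin n → ℤ)) (b : (Fin n → ℤ) → ℝ) (x w : Fin n → ℝ) : ℝ :=
  expSum S (dirWeight b w) x / expSum S b x

def hessLog (S : Finset (Fin n → ℤ)) (b : (Fin n → ℤ) → ℝ) (x w₁ w₂ : Fin n → ℝ) : ℝ :=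
  (expSum S (dirWeight (dirWeight b w₁) w₂) x * expSum S b x
    - expSum S (dirWeight b w₁) x * expSum S (dirWeight b w₂) x) / expSum S b x ^ 2

variable {S : Finset (Fin n → ℤ)} {b : (Fin n → ℤ) → ℝ}

lemma dirWeight_comm (b : (Fin n → ℤ) → ℝ) (w₁ w₂ : Fin n → ℝ) :
    dirWeight (dirWeight b w₁) w₂ = dirWeight (dirWeight b w₂) w₁ := by
  ext u; simp only [dirWeight]; ring

lemma hessLog_comm (x w₁ w₂ : Fin n → ℝ) : hessLog S b x w₁ w₂ = hessLog S b x w₂ w₁ := by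
  rw [hessLog, hessLog, dirWeight_comm, mul_comm (expSum S (dirWeight b w₁) x)]

lemma expSum_pos (hb : ∀ u ∈ S, 0 ≤ b u) (h : ∃ u ∈ S, 0 < b u) (x : Fin n → ℝ) :
    0 < expSum S b x := by
  obtain ⟨u, hu, hbu⟩ := h
  exact sum_pos' (fun u hu => mul_nonneg (hb u hu) (exp_pos _).le)
    ⟨u, hu, mul_pos hbu (exp_pos _)⟩

lemma differentiable_expSum : Differentiable ℝ (expSum S b) := by
  unfold expSum zdot
  fun_prop

lemma hasLineDerivAt_expSum (x w : Fin n → ℝ) :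
    HasLineDerivAt ℝ (expSum S b) (expSum S (dirWeight b w) x) x w := by
  unfold HasLineDerivAt expSum
  simp only [zdot_add_smul]
  refine HasDerivAt.fun_sum fun u _ => ?_
  have h : HasDerivAt (fun s : ℝ => 2 * (zdot u x + s * zdot u w)) (2 * zdot u w) 0 := by
    simpa using ((((hasDerivAt_id (0 : ℝ)).mul_const (zdot u w)).const_add (zdot u x)).const_mul
      (2 : ℝ))
  refine (h.exp.const_mul (b u)).congr_deriv ?_
  simp only [dirWeight, zero_mul, add_zero]
  ring

lemma fderiv_expSum_apply (x w : Fin n → ℝ) :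
    fderiv ℝ (expSum S b) x w = expSum S (dirWeight b w) x := by
  rw [← differentiable_expSum.differentiableAt.lineDeriv_eq_fderiv,
    (hasLineDerivAt_expSum x w).lineDeriv]

lemma fderiv_log_expSum_apply (hb : ∀ x, 0 < expSum S b x) (x w : Fin n → ℝ) :
    fderiv ℝ (fun y => log (expSum S b y)) x w = gradLog S b x w := by
  rw [fderiv.log differentiable_expSum.differentiableAt (hb x).ne', FunLike.coe_smul, Pi.smul_apply,
    fderiv_expSum_apply, smul_eq_mul, gradLog, inv_mul_eq_div]

lemma differentiable_gradLog (hb : ∀ x, 0 < expSum S b x) (w : Fin n → ℝ) :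
    Differentiable ℝ (fun x => gradLog S b x w) := by
  simpa only [gradLog, div_eq_mul_inv] using
    differentiable_expSum.fun_mul (differentiable_expSum.fun_inv fun x => (hb x).ne')

lemma fderiv_gradLog_apply (hb : ∀ x, 0 < expSum S b x) (x w₁ w₂ : Fin n → ℝ) :
    fderiv ℝ (fun y => gradLog S b y w₁) x w₂ = hessLog S b x w₁ w₂ := by
  rw [← (differentiable_gradLog hb w₁).differentiableAt.lineDeriv_eq_fderiv]
  refine HasLineDerivAt.lineDeriv ?_
  have h := (hasLineDerivAt_expSum (S := S) (b := dirWeight b w₁) x w₂).fun_div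
    (hasLineDerivAt_expSum (S := S) (b := b) x w₂) (by simpa using (hb x).ne')
  simpa [HasLineDerivAt, gradLog, hessLog] using h

end ExpSum

section Line

variable {n : ℕ}

-- The truncated exponent `(e u - m).toNat` only matters where `m ≤ e u`, see `expSum_line`.
def linePoly (S : Finset (Fin n → ℤ)) (b : (Fin n → ℤ) → ℝ) (x₀ : Fin n → ℝ)
    (e : (Fin n → ℤ) → ℤ) (m : ℤ) : ℝ[X] :=
  ∑ u ∈ S, C (b u * exp (2 * zdot u x₀)) * X ^ (e u - m).toNat

structure IsLowestLevel (S : Finset (Fin n → ℤ)) (b : (Fin n → ℤ) → ℝ) (e : (Fin n → ℤ) → ℤ)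
    (m : ℤ) : Prop where
  nonneg : ∀ u ∈ S, 0 ≤ b u
  le_of_ne_zero : ∀ u ∈ S, b u ≠ 0 → m ≤ e u
  exists_pos : ∃ u ∈ S, 0 < b u ∧ e u = m

variable {S : Finset (Fin n → ℤ)} {b : (Fin n → ℤ) → ℝ} {x₀ w : Fin n → ℝ}
  {e : (Fin n → ℤ) → ℤ} {m : ℤ} {r : ℝ}

lemma dirWeight_le_of_ne_zero (hb : ∀ u ∈ S, b u ≠ 0 → m ≤ e u) (w' : Fin n → ℝ) :
    ∀ u ∈ S, dirWeight b w' u ≠ 0 → m ≤ e u :=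
  fun u hu h => hb u hu (right_ne_zero_of_mul h)

lemma cast_toNat_sub_of_le {u : Fin n → ℤ} (h : m ≤ e u) : (((e u - m).toNat : ℕ) : ℝ) = e u - m := by
  have := Int.toNat_of_nonneg (sub_nonneg.2 h)
  exact_mod_cast this

lemma expSum_line (hw : ∀ u, zdot u w = e u + r) (hb : ∀ u ∈ S, b u ≠ 0 → m ≤ e u) (s : ℝ) :
    expSum S b (x₀ + s • w)
      = exp (2 * s * (m + r)) * (linePoly S b x₀ e m).eval (exp (2 * s)) := by
  simp only [expSum, linePoly, eval_finsetSum, eval_mul, eval_C, eval_pow, eval_X, mul_sum]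
  refine sum_congr rfl fun u hu => ?_
  by_cases hbu : b u = 0
  · simp [hbu]
  rw [zdot_add_smul, hw, ← exp_nat_mul, cast_toNat_sub_of_le (hb u hu hbu),
    show 2 * (zdot u x₀ + s * (e u + r))
      = 2 * s * (m + r) + 2 * zdot u x₀ + (e u - m) * (2 * s) by ring, exp_add, exp_add]
  ring

lemma linePoly_dirWeight (hw : ∀ u, zdot u w = e u + r) (hb : ∀ u ∈ S, b u ≠ 0 → m ≤ e u) :
    linePoly S (dirWeight b w) x₀ e m
      = C 2 * (X * derivative (linePoly S b x₀ e m) + C (m + r) * linePoly S b x₀ e m) := by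
  simp only [linePoly, derivative_sum, mul_sum, ← sum_add_distrib]
  refine sum_congr rfl fun u hu => ?_
  by_cases hbu : b u = 0
  · simp [dirWeight, hbu]
  rw [X_mul_derivative_C_mul_X_pow, cast_toNat_sub_of_le (hb u hu hbu), dirWeight, hw]
  simp only [map_mul, map_add, map_sub, map_intCast, map_ofNat]
  ring

lemma IsLowestLevel.expSum_pos (hb : IsLowestLevel S b e m) (x : Fin n → ℝ) :
    0 < expSum S b x :=
  GuilleminPotential.expSum_pos hb.nonneg (hb.exists_pos.imp fun _ ⟨hu, h, _⟩ => ⟨hu, h⟩) x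

lemma IsLowestLevel.linePoly_eval_zero_pos (hb : IsLowestLevel S b e m) (x₀ : Fin n → ℝ) :
    0 < (linePoly S b x₀ e m).eval 0 := by
  obtain ⟨u, hu, hbu, heu⟩ := hb.exists_pos
  simp only [linePoly, eval_finsetSum, eval_mul, eval_C, eval_pow, eval_X]
  refine sum_pos' (fun u hu => ?_) ⟨u, hu, ?_⟩
  · exact mul_nonneg (mul_nonneg (hb.nonneg u hu) (exp_pos _).le) (pow_nonneg le_rfl _)
  · simpa [heu] using mul_pos hbu (exp_pos _)

lemma IsLowestLevel.linePoly_sq_eval_zero_ne_zero (hb : IsLowestLevel S b e m) (x₀ : Fin n → ℝ) :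
    (linePoly S b x₀ e m ^ 2).eval 0 ≠ 0 := by
  simpa using (hb.linePoly_eval_zero_pos x₀).ne'

section Direction

variable (hw : ∀ u, zdot u w = e u + r)
include hw

lemma hessLog_line (hb : ∀ u ∈ S, b u ≠ 0 → m ≤ e u) (w₁ w₂ : Fin n → ℝ) (s : ℝ) :
    hessLog S b (x₀ + s • w) w₁ w₂
      = (linePoly S (dirWeight (dirWeight b w₁) w₂) x₀ e m * linePoly S b x₀ e m
          - linePoly S (dirWeight b w₁) x₀ e m * linePoly S (dirWeight b w₂) x₀ e m).eval
            (exp (2 * s)) / (linePoly S b x₀ e m ^ 2).eval (exp (2 * s)) := by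
  have hb₁ := dirWeight_le_of_ne_zero hb w₁
  rw [hessLog, expSum_line hw hb, expSum_line hw hb₁,
    expSum_line hw (dirWeight_le_of_ne_zero hb w₂), expSum_line hw (dirWeight_le_of_ne_zero hb₁ w₂),
    show ∀ E A B C D : ℝ, (E * A * (E * B) - E * C * (E * D)) / (E * B) ^ 2
      = E ^ 2 * (A * B - C * D) / (E ^ 2 * B ^ 2) from fun _ _ _ _ _ => by ring,
    mul_div_mul_left _ _ (pow_ne_zero 2 (exp_pos _).ne')]
  simp only [eval_sub, eval_mul, eval_pow]

lemma hessLog_line_dir (hb : ∀ u ∈ S, b u ≠ 0 → m ≤ e u) (w₂ : Fin n → ℝ) (s : ℝ) :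
    hessLog S b (x₀ + s • w) w w₂
      = 2 * exp (2 * s) * (wronskian (linePoly S b x₀ e m)
          (linePoly S (dirWeight b w₂) x₀ e m)).eval (exp (2 * s))
        / (linePoly S b x₀ e m ^ 2).eval (exp (2 * s)) := by
  rw [hessLog_line hw hb, dirWeight_comm,
    linePoly_dirWeight hw (dirWeight_le_of_ne_zero hb w₂), linePoly_dirWeight hw hb, wronskian]
  simp only [eval_mul, eval_add, eval_sub, eval_C, eval_X]
  ring

lemma tendsto_hessLog_line (hb : IsLowestLevel S b e m) (w₁ w₂ : Fin n → ℝ) :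
    ∃ L : ℝ, Tendsto (fun s : ℝ => hessLog S b (x₀ + s • w) w₁ w₂) atBot (𝓝 L) :=
  ⟨_, (tendsto_eval_div_eval_exp_two_mul_atBot _ (hb.linePoly_sq_eval_zero_ne_zero x₀)).congr
    fun s => (hessLog_line hw hb.le_of_ne_zero w₁ w₂ s).symm⟩

lemma tendsto_exp_neg_mul_hessLog_line (hb : IsLowestLevel S b e m) (w₂ : Fin n → ℝ) :
    Tendsto (fun s : ℝ => exp (-s) * hessLog S b (x₀ + s • w) w w₂) atBot (𝓝 0) := by
  have h := tendsto_exp_atBot.mul ((tendsto_eval_div_eval_exp_two_mul_atBot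
    (wronskian (linePoly S b x₀ e m) (linePoly S (dirWeight b w₂) x₀ e m))
    (hb.linePoly_sq_eval_zero_ne_zero x₀)).const_mul 2)
  rw [zero_mul] at h
  refine h.congr fun s => ?_
  rw [hessLog_line_dir hw hb.le_of_ne_zero, show exp s = exp (-s) * exp (2 * s) by
    rw [← exp_add]; ring_nf]
  ring

lemma tendsto_gradLog_line (hb : IsLowestLevel S b e m) :
    Tendsto (fun s : ℝ => exp (-2 * s) * (gradLog S b (x₀ + s • w) w - 2 * (m + r))) atBot
      (𝓝 (2 * ((derivative (linePoly S b x₀ e m)).eval 0 / (linePoly S b x₀ e m).eval 0))) := by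
  refine ((tendsto_eval_div_eval_exp_two_mul_atBot _
    (hb.linePoly_eval_zero_pos x₀).ne').const_mul 2).congr fun s => ?_
  have hP : (linePoly S b x₀ e m).eval (exp (2 * s)) ≠ 0 := by
    have h := hb.expSum_pos (x₀ + s • w)
    rw [expSum_line hw hb.le_of_ne_zero] at h
    exact (pos_of_mul_pos_right h (exp_pos _).le).ne'
  rw [gradLog, expSum_line hw hb.le_of_ne_zero,
    expSum_line hw (dirWeight_le_of_ne_zero hb.le_of_ne_zero w),
    mul_div_mul_left _ _ (exp_pos _).ne', linePoly_dirWeight hw hb.le_of_ne_zero,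
    neg_mul, exp_neg]
  simp only [eval_mul, eval_add, eval_C, eval_X]
  field_simp
  ring

lemma tendsto_hessLog_line_self (hb : IsLowestLevel S b e m) :
    Tendsto (fun s : ℝ => exp (-2 * s) * hessLog S b (x₀ + s • w) w w) atBot
      (𝓝 (2 * (2 * ((derivative (linePoly S b x₀ e m)).eval 0
        / (linePoly S b x₀ e m).eval 0)))) := by
  have hlim : 2 * ((wronskian (linePoly S b x₀ e m) (linePoly S (dirWeight b w) x₀ e m)).eval 0
      / (linePoly S b x₀ e m ^ 2).eval 0)
      = 2 * (2 * ((derivative (linePoly S b x₀ e m)).eval 0 / (linePoly S b x₀ e m).eval 0)) := by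
    have hP := (hb.linePoly_eval_zero_pos x₀).ne'
    rw [linePoly_dirWeight hw hb.le_of_ne_zero, wronskian]
    simp only [derivative_mul, derivative_add, derivative_C, derivative_X, eval_mul, eval_add,
      eval_sub, eval_pow, eval_C, eval_X, eval_one, eval_zero]
    field_simp
    ring
  rw [← hlim]
  refine ((tendsto_eval_div_eval_exp_two_mul_atBot _
    (hb.linePoly_sq_eval_zero_ne_zero x₀)).const_mul 2).congr fun s => ?_
  rw [hessLog_line_dir hw hb.le_of_ne_zero, neg_mul, exp_neg]
  field_simp

end Direction

end Line

section Potential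

variable {n d : ℕ} {v : Fin d → Fin n → ℤ} {lam : Fin d → ℤ} {S : Finset (Fin n → ℤ)}
  {c : (Fin n → ℤ) → ℝ}

variable (v lam c) in
def lfunWeight (i : Fin d) (u : Fin n → ℤ) : ℝ := c u * lfun v lam i u

variable (a : Fin d → ℤ) (hpos : ∀ i x, 0 < expSum S (lfunWeight v lam c i) x)
  (hpos₀ : ∀ x, 0 < expSum S c x)
include hpos hpos₀

lemma gzero_eq_sum_log :
    gzero v lam S c a = fun x => ∑ i, (-(a i : ℝ) / 2)
      * (log (expSum S (lfunWeight v lam c i) x) - log (expSum S c x)) := by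
  funext x
  rw [gzero, mul_sum]
  refine sum_congr rfl fun i _ => ?_
  change -(1 / 2) * ((a i : ℝ) * log (expSum S (lfunWeight v lam c i) x / expSum S c x)) = _
  rw [log_div (hpos i x).ne' (hpos₀ x).ne']
  ring

lemma fderiv_gzero_apply (x w : Fin n → ℝ) :
    fderiv ℝ (gzero v lam S c a) x w
      = ∑ i, (-(a i : ℝ) / 2) * (gradLog S (lfunWeight v lam c i) x w - gradLog S c x w) := by
  rw [gzero_eq_sum_log a hpos hpos₀, fderiv_sum_mul_sub_apply _ _
    (fun i => (differentiable_expSum.log fun y => (hpos i y).ne') x)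
    ((differentiable_expSum.log fun y => (hpos₀ y).ne') x)]
  simp only [fderiv_log_expSum_apply (hpos _), fderiv_log_expSum_apply hpos₀]

lemma pd2_gzero (x w₁ w₂ : Fin n → ℝ) :
    pd2 (gzero v lam S c a) x w₁ w₂
      = ∑ i, (-(a i : ℝ) / 2)
        * (hessLog S (lfunWeight v lam c i) x w₁ w₂ - hessLog S c x w₁ w₂) := by
  have h : (fun y => fderiv ℝ (gzero v lam S c a) y w₁)
      = fun y => ∑ i, (-(a i : ℝ) / 2)
        * (gradLog S (lfunWeight v lam c i) y w₁ - gradLog S c y w₁) :=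
    funext fun y => fderiv_gzero_apply a hpos hpos₀ y w₁
  rw [pd2, h, fderiv_sum_mul_sub_apply _ _ (fun i => differentiable_gradLog (hpos i) w₁ x)
    (differentiable_gradLog hpos₀ w₁ x)]
  simp only [fderiv_gradLog_apply (hpos _), fderiv_gradLog_apply hpos₀]

lemma pd2_gzero_comm (x w₁ w₂ : Fin n → ℝ) :
    pd2 (gzero v lam S c a) x w₁ w₂ = pd2 (gzero v lam S c a) x w₂ w₁ := by
  simp only [pd2_gzero a hpos hpos₀, hessLog_comm x w₁]

end Potential

section Setting

variable {n d : ℕ}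

lemma xi_update (V : Fin n → Fin n → ℝ) (t : Fin n → ℝ) (j : Fin n) (s : ℝ) :
    xi V (Function.update t j s) = xi V (Function.update t j 0) + s • V j := by
  have h : ∀ m, Function.update t j s m • V m
      = Function.update t j 0 m • V m + if m = j then s • V j else 0 := by
    intro m
    by_cases hm : m = j
    · subst hm; simp
    · simp [hm]
  simp only [xi, h, sum_add_distrib, sum_ite_eq', mem_univ, if_true]

def dirVec (hnd : n ≤ d) (v : Fin d → Fin n → ℤ) (j : Fin n) : Fin n → ℝ :=
  fun p => v (Fin.castLE hnd j) p

lemma zdot_dirVec (hnd : n ≤ d) (v : Fin d → Fin n → ℤ) (lam : Fin d → ℤ) (j : Fin n)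
    (u : Fin n → ℤ) :
    zdot u (dirVec hnd v j) = lfun v lam (Fin.castLE hnd j) u + -(lam (Fin.castLE hnd j) : ℝ) := by
  simp only [zdot, dirVec, lfun]
  push_cast
  ring

variable (hnd : n ≤ d) {v : Fin d → Fin n → ℤ} {lam : Fin d → ℤ} {S : Finset (Fin n → ℤ)}
  {c : (Fin n → ℤ) → ℝ}

lemma isLowestLevel_base (hS : ∀ u ∈ S, ∀ i, 0 ≤ lfun v lam i u) (hc : ∀ u ∈ S, 0 ≤ c u)
    {u₀ : Fin n → ℤ} (hu₀S : u₀ ∈ S) (hu₀c : 0 < c u₀)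
    (hu₀l : ∀ j : Fin n, lfun v lam (Fin.castLE hnd j) u₀ = 0) (l : Fin n) :
    IsLowestLevel S c (lfun v lam (Fin.castLE hnd l)) 0 :=
  ⟨hc, fun u hu _ => hS u hu _, u₀, hu₀S, hu₀c, hu₀l l⟩

lemma isLowestLevel_lfunWeight (hS : ∀ u ∈ S, ∀ i, 0 ≤ lfun v lam i u) (hc : ∀ u ∈ S, 0 ≤ c u)
    {u₀ : Fin n → ℤ} (hu₀S : u₀ ∈ S) (hu₀c : 0 < c u₀)
    (hu₀l : ∀ j : Fin n, lfun v lam (Fin.castLE hnd j) u₀ = 0)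
    (hu₀i : ∀ i : Fin d, n ≤ (i : ℕ) → 1 ≤ lfun v lam i u₀)
    (huk : ∀ k : Fin n, ∃ u ∈ S, 0 < c u ∧ lfun v lam (Fin.castLE hnd k) u = 1 ∧
      (∀ j : Fin n, j ≠ k → lfun v lam (Fin.castLE hnd j) u = 0))
    (l : Fin n) (i : Fin d) :
    IsLowestLevel S (lfunWeight v lam c i) (lfun v lam (Fin.castLE hnd l))
      (if i = Fin.castLE hnd l then 1 else 0) := by
  have hnonneg : ∀ u ∈ S, 0 ≤ lfunWeight v lam c i u :=
    fun u hu => mul_nonneg (hc u hu) (Int.cast_nonneg_iff.2 (hS u hu i))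
  split_ifs with hi
  · subst hi
    obtain ⟨u, hu, hcu, hlu, -⟩ := huk l
    refine ⟨hnonneg, fun u hu h => ?_, u, hu, by simpa [lfunWeight, hlu] using hcu, hlu⟩
    have := hS u hu (Fin.castLE hnd l)
    have : lfun v lam (Fin.castLE hnd l) u ≠ 0 := by
      intro h0; simp [lfunWeight, h0] at h
    omega
  refine ⟨hnonneg, fun u hu _ => hS u hu _, ?_⟩
  by_cases hin : (i : ℕ) < n
  · obtain ⟨u, hu, hcu, hlu, hlu₀⟩ := huk ⟨i, hin⟩
    have hci : Fin.castLE hnd ⟨i, hin⟩ = i := rfl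
    refine ⟨u, hu, by simpa [lfunWeight, hci ▸ hlu] using hcu, hlu₀ l fun h => hi ?_⟩
    rw [h, hci]
  · exact ⟨u₀, hu₀S, mul_pos hu₀c (by exact_mod_cast hu₀i i (not_lt.1 hin)), hu₀l l⟩

end Setting

section Growth

variable {n d : ℕ} (hnd : n ≤ d) {v : Fin d → Fin n → ℤ} {lam : Fin d → ℤ}
  {S : Finset (Fin n → ℤ)} {c : (Fin n → ℤ) → ℝ} (a : Fin d → ℤ)
  (hlev : ∀ l i, IsLowestLevel S (lfunWeight v lam c i) (lfun v lam (Fin.castLE hnd l))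
    (if i = Fin.castLE hnd l then 1 else 0))
  (hlev₀ : ∀ l, IsLowestLevel S c (lfun v lam (Fin.castLE hnd l)) 0)
include hlev hlev₀

lemma gzero_growth_diag (j : Fin n) (t : Fin n → ℝ) :
    ∃ L : ℝ,
      Tendsto (fun s : ℝ => 2 * exp (-2 * s) * (pd1 (gzero v lam S c a)
        (xi (dirVec hnd v) (Function.update t j s)) (dirVec hnd v j) + a (Fin.castLE hnd j)))
        atBot (𝓝 L) ∧
      Tendsto (fun s : ℝ => exp (-2 * s) * pd2 (gzero v lam S c a)
        (xi (dirVec hnd v) (Function.update t j s)) (dirVec hnd v j) (dirVec hnd v j))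
        atBot (𝓝 L) := by
  have hpos i := (hlev j i).expSum_pos
  have hpos₀ := (hlev₀ j).expSum_pos
  have hw := zdot_dirVec hnd v lam j
  set x₀ := xi (dirVec hnd v) (Function.update t j 0)
  have hgrad i := tendsto_gradLog_line (x₀ := x₀) hw (hlev j i)
  have hgrad₀ := tendsto_gradLog_line (x₀ := x₀) hw (hlev₀ j)
  have hhess i := tendsto_hessLog_line_self (x₀ := x₀) hw (hlev j i)
  have hhess₀ := tendsto_hessLog_line_self (x₀ := x₀) hw (hlev₀ j)
  refine ⟨_, (tendsto_finsetSum univ fun i _ => ((hgrad i).sub hgrad₀).const_mul (-(a i : ℝ))).congr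
    fun s => ?_, ?_⟩
  · have ha : (a (Fin.castLE hnd j) : ℝ)
        = ∑ i, (a i : ℝ) * ((if i = Fin.castLE hnd j then 1 else 0 : ℤ) : ℝ) := by
      simp
    rw [xi_update, pd1, fderiv_gzero_apply a hpos hpos₀, ha, ← sum_add_distrib, mul_sum]
    refine sum_congr rfl fun i _ => ?_
    push_cast
    ring
  · convert (tendsto_finsetSum univ fun i _ =>
      ((hhess i).sub hhess₀).const_mul (-(a i : ℝ) / 2)).congr fun s => ?_ using 2
    · exact sum_congr rfl fun i _ => by ring
    · rw [xi_update, pd2_gzero a hpos hpos₀, mul_sum]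
      exact sum_congr rfl fun i _ => by ring

lemma gzero_growth_bounded (j k l : Fin n) (t : Fin n → ℝ) :
    ∃ L : ℝ, Tendsto (fun s : ℝ => pd2 (gzero v lam S c a)
      (xi (dirVec hnd v) (Function.update t l s)) (dirVec hnd v j) (dirVec hnd v k))
      atBot (𝓝 L) := by
  have hw := zdot_dirVec hnd v lam l
  set x₀ := xi (dirVec hnd v) (Function.update t l 0)
  choose L hL using fun i =>
    tendsto_hessLog_line (x₀ := x₀) hw (hlev l i) (dirVec hnd v j) (dirVec hnd v k)
  obtain ⟨L₀, hL₀⟩ := tendsto_hessLog_line (x₀ := x₀) hw (hlev₀ l) (dirVec hnd v j) (dirVec hnd v k)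
  refine ⟨_, (tendsto_finsetSum univ fun i _ => ((hL i).sub hL₀).const_mul (-(a i : ℝ) / 2)).congr
    fun s => ?_⟩
  rw [xi_update, pd2_gzero a (hlev l · |>.expSum_pos) (hlev₀ l).expSum_pos]

lemma tendsto_exp_mul_pd2_gzero (j : Fin n) (w₂ : Fin n → ℝ) (t : Fin n → ℝ) (τ : ℝ) :
    Tendsto (fun s : ℝ => exp (-s - τ) * pd2 (gzero v lam S c a)
      (xi (dirVec hnd v) (Function.update t j s)) (dirVec hnd v j) w₂) atBot (𝓝 0) := by
  have hw := zdot_dirVec hnd v lam j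
  set x₀ := xi (dirVec hnd v) (Function.update t j 0)
  have h := (tendsto_finsetSum univ fun i _ =>
    ((tendsto_exp_neg_mul_hessLog_line (x₀ := x₀) hw (hlev j i) w₂).sub
      (tendsto_exp_neg_mul_hessLog_line (x₀ := x₀) hw (hlev₀ j) w₂)).const_mul
        (-(a i : ℝ) / 2)).const_mul (exp (-τ))
  simp only [sub_self, mul_zero, sum_const_zero] at h
  refine h.congr fun s => ?_
  rw [xi_update, pd2_gzero a (hlev j · |>.expSum_pos) (hlev₀ j).expSum_pos, mul_sum, mul_sum,
    show exp (-s - τ) = exp (-τ) * exp (-s) by rw [← exp_add]; ring_nf]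
  exact sum_congr rfl fun i _ => by ring

lemma gzero_growth_offdiag (j k : Fin n) (t : Fin n → ℝ) :
    Tendsto (fun s : ℝ => exp (-s - t k) * pd2 (gzero v lam S c a)
        (xi (dirVec hnd v) (Function.update t j s)) (dirVec hnd v j) (dirVec hnd v k))
      atBot (𝓝 0) ∧
    Tendsto (fun s : ℝ => exp (-(t j) - s) * pd2 (gzero v lam S c a)
        (xi (dirVec hnd v) (Function.update t k s)) (dirVec hnd v j) (dirVec hnd v k))
      atBot (𝓝 0) := by
  refine ⟨tendsto_exp_mul_pd2_gzero hnd a hlev hlev₀ j _ t (t k),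
    (tendsto_exp_mul_pd2_gzero hnd a hlev hlev₀ k (dirVec hnd v j) t (t j)).congr fun s => ?_⟩
  rw [neg_sub_comm, pd2_gzero_comm a (hlev k · |>.expSum_pos) (hlev₀ k).expSum_pos]

end Growth

end GuilleminPotential

open GuilleminPotential in
theorem gzero_satisfies_growth_condition_general (n d : ℕ) (hnd : n ≤ d)
    (v : Fin d → Fin n → ℤ) (lam : Fin d → ℤ)
    (S : Finset (Fin n → ℤ))
    (hS : ∀ u : Fin n → ℤ, u ∈ S ↔ ∀ i : Fin d, 0 ≤ lfun v lam i u)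
    (c : (Fin n → ℤ) → ℝ) (hc : ∀ u ∈ S, 0 ≤ c u)
    (hu0 : ∃ u₀ ∈ S, 0 < c u₀ ∧
      (∀ j : Fin n, lfun v lam (Fin.castLE hnd j) u₀ = 0) ∧
      (∀ i : Fin d, n ≤ (i : ℕ) → 1 ≤ lfun v lam i u₀))
    (huk : ∀ k : Fin n, ∃ u ∈ S, 0 < c u ∧
      lfun v lam (Fin.castLE hnd k) u = 1 ∧
      (∀ j : Fin n, j ≠ k → lfun v lam (Fin.castLE hnd j) u = 0))
    (a : Fin d → ℤ) :
    GrowthCondition (fun j p => (v (Fin.castLE hnd j) p : ℝ))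
      (fun j => (a (Fin.castLE hnd j) : ℝ)) (gzero v lam S c a) := by
  obtain ⟨u₀, hu₀S, hu₀c, hu₀l, hu₀i⟩ := hu0
  have hSl : ∀ u ∈ S, ∀ i, 0 ≤ lfun v lam i u := fun u hu => (hS u).1 hu
  have hlev := isLowestLevel_lfunWeight hnd hSl hc hu₀S hu₀c hu₀l hu₀i huk
  have hlev₀ := isLowestLevel_base hnd hSl hc hu₀S hu₀c hu₀l
  exact ⟨gzero_growth_diag hnd a hlev hlev₀, gzero_growth_bounded hnd a hlev hlev₀,
    fun j k _ => gzero_growth_offdiag hnd a hlev hlev₀ j k⟩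

/-- Lemma 1 of the paper: the Guillemin potential `g₀` satisfies the growth
condition (∗) with data `(v₁,…,vₙ; a₁,…,aₙ)`. -/
theorem gzero_satisfies_growth_condition (n d : ℕ) (hnd : n ≤ d)
    (v : Fin d → Fin n → ℤ) (lam : Fin d → ℤ)
    (S : Finset (Fin n → ℤ))
    (hS : ∀ u : Fin n → ℤ, u ∈ S ↔ ∀ i : Fin d, 0 ≤ lfun v lam i u)
    (hbdd : Bornology.IsBounded {x : Fin n → ℝ | ∀ i : Fin d, 0 ≤ lfunR v lam i x})
    (c : (Fin n → ℤ) → ℝ) (hc : ∀ u ∈ S, 0 ≤ c u)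
    (hbasis : IsUnit (Matrix.of fun j k : Fin n => v (Fin.castLE hnd j) k).det)
    (hu0 : ∃ u₀ ∈ S, 0 < c u₀ ∧
      (∀ j : Fin n, lfun v lam (Fin.castLE hnd j) u₀ = 0) ∧
      (∀ i : Fin d, n ≤ (i : ℕ) → 1 ≤ lfun v lam i u₀))
    (huk : ∀ k : Fin n, ∃ u ∈ S, 0 < c u ∧
      lfun v lam (Fin.castLE hnd k) u = 1 ∧
      (∀ j : Fin n, j ≠ k → lfun v lam (Fin.castLE hnd j) u = 0))
    (a : Fin d → ℤ) :
    GrowthCondition (fun j p => (v (Fin.castLE hnd j) p : ℝ))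
      (fun j => (a (Fin.castLE hnd j) : ℝ)) (gzero v lam S c a) :=
  gzero_satisfies_growth_condition_general n d hnd v lam S hS c hc hu0 huk a
end
end

section
/- Under the hypotheses on (v₁,…,v_d; λ₁,…,λ_d; c; a) stated in the context, fix k ∈ {1,…,n} and fix t₁,…,t_{k−1},t_{k+1},…,tₙ ∈ ℝ, and set b_u = c_u·e^{2·Σ_{m∈{1,…,n}, m≠k} l_m(u)t_m} for u ∈ S. Then, as tₖ → −∞, the function e^{−2tₖ}·(⟨∇g₀(ξ(t)), vₖ⟩ + aₖ) converges to the value (Σᵢ₌₁^d aᵢ)·(Σ_{u∈S, lₖ(u)=1} b_u)/(Σ_{u∈S, lₖ(u)=0} b_u) − Σ_{i∈{1,…,d}, i≠k} aᵢ·(Σ_{u∈S, lₖ(u)=1, lᵢ(u)≥1} lᵢ(u)b_u)/(Σ_{u∈S, lₖ(u)=0, lᵢ(u)≥1} lᵢ(u)b_u) − 2aₖ·(Σ_{u∈S, lₖ(u)=2} b_u)/(Σ_{u∈S, lₖ(u)=1} b_u). -/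
open Filter

noncomputable section

/-- `b_u = c_u e^{2 Σ_{m ≠ k} l_m(u) t_m}` (the coordinates `t_m`, `m ≠ k`, being fixed). -/
def bcoef {n d : ℕ} (v : Fin d → Fin n → ℤ) (lam : Fin d → ℤ) (hnd : n ≤ d)
    (c : (Fin n → ℤ) → ℝ) (k : Fin n) (t : Fin n → ℝ) (u : Fin n → ℤ) : ℝ :=
  c u * Real.exp (2 * ∑ m ∈ Finset.univ.erase k,
    (lfun v lam (Fin.castLE hnd m) u : ℝ) * t m)

/-- The limiting value
`(Σᵢ aᵢ)·(Σ_{lₖ(u)=1} b_u)/(Σ_{lₖ(u)=0} b_u)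
  − Σ_{i≠k} aᵢ·(Σ_{lₖ(u)=1, lᵢ(u)≥1} lᵢ(u)b_u)/(Σ_{lₖ(u)=0, lᵢ(u)≥1} lᵢ(u)b_u)
  − 2aₖ·(Σ_{lₖ(u)=2} b_u)/(Σ_{lₖ(u)=1} b_u)`. -/
def limitValue {n d : ℕ} (v : Fin d → Fin n → ℤ) (lam : Fin d → ℤ) (hnd : n ≤ d)
    (S : Finset (Fin n → ℤ)) (c : (Fin n → ℤ) → ℝ) (a : Fin d → ℤ)
    (k : Fin n) (t : Fin n → ℝ) : ℝ :=
  (∑ i : Fin d, (a i : ℝ)) *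
      ((∑ u ∈ S.filter (fun u => lfun v lam (Fin.castLE hnd k) u = 1),
          bcoef v lam hnd c k t u) /
        (∑ u ∈ S.filter (fun u => lfun v lam (Fin.castLE hnd k) u = 0),
          bcoef v lam hnd c k t u)) -
    (∑ i ∈ Finset.univ.erase (Fin.castLE hnd k), (a i : ℝ) *
      ((∑ u ∈ S.filter (fun u =>
            lfun v lam (Fin.castLE hnd k) u = 1 ∧ 1 ≤ lfun v lam i u),
          (lfun v lam i u : ℝ) * bcoef v lam hnd c k t u) /
        (∑ u ∈ S.filter (fun u =>
            lfun v lam (Fin.castLE hnd k) u = 0 ∧ 1 ≤ lfun v lam i u),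
          (lfun v lam i u : ℝ) * bcoef v lam hnd c k t u))) -
    2 * (a (Fin.castLE hnd k) : ℝ) *
      ((∑ u ∈ S.filter (fun u => lfun v lam (Fin.castLE hnd k) u = 2),
          bcoef v lam hnd c k t u) /
        (∑ u ∈ S.filter (fun u => lfun v lam (Fin.castLE hnd k) u = 1),
          bcoef v lam hnd c k t u))

/-!
Along the line where only `tₖ = s` varies, `c_u e^{2⟨u,ξ⟩} = E(s) · b_u e^{2 lₖ(u) s}` with `E(s)`
independent of `u`, so `E` cancels in every quotient of `g₀`. Writing
`L f s = Σ_u f(u) b_u e^{2 lₖ(u) s}`, this gives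
`⟨∇g₀, vₖ⟩ = -Σᵢ aᵢ (L (lₖ lᵢ) / L lᵢ - L lₖ / L 1)`. As `lₖ ≥ 0` on `S`, `e^{-2Ns} L f s` tends to
`Σ_{lₖ(u) = N} f(u) b_u` as `s → -∞` whenever `f` vanishes where `lₖ < N`. The term `aₖ` is
absorbed by `L (lₖ lₖ) / L lₖ - 1 = L (lₖ (lₖ - 1)) / L lₖ`, which is `O(e^{2s})`, and the witnesses
`u₀`, `uₖ` keep all limiting denominators positive.
-/

open Real

section ExpSum

variable {ι : Type*} (S : Finset ι)

def expSum (f r : ι → ℝ) (s : ℝ) : ℝ :=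
  ∑ u ∈ S, f u * exp (r u * s)

theorem hasDerivAt_expSum (f r : ι → ℝ) (s : ℝ) :
    HasDerivAt (expSum S f r) (expSum S (fun u => r u * f u) r s) s := by
  unfold expSum
  refine HasDerivAt.fun_sum fun u _ => ?_
  exact (((hasDerivAt_id' s).const_mul (r u)).exp.const_mul (f u)).congr_deriv (by ring)

theorem exp_mul_expSum (f r : ι → ℝ) (a s : ℝ) :
    exp (a * s) * expSum S f r s = expSum S f (fun u => r u + a) s := by
  simp only [expSum, Finset.mul_sum]
  refine Finset.sum_congr rfl fun u _ => ?_
  rw [mul_left_comm, ← exp_add]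
  congr 2
  ring

theorem expSum_pos {f : ι → ℝ} (r : ι → ℝ) (s : ℝ) (hf : ∀ u ∈ S, 0 ≤ f u)
    (hpos : ∃ u ∈ S, 0 < f u) : 0 < expSum S f r s := by
  obtain ⟨u, hu, hfu⟩ := hpos
  exact Finset.sum_pos' (fun u hu => mul_nonneg (hf u hu) (exp_pos _).le)
    ⟨u, hu, mul_pos hfu (exp_pos _)⟩

theorem tendsto_expSum_atBot {f r : ι → ℝ} (hf : ∀ u ∈ S, r u < 0 → f u = 0) :
    Tendsto (expSum S f r) atBot (nhds (∑ u ∈ S with r u = 0, f u)) := by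
  rw [Finset.sum_filter]
  refine tendsto_finsetSum _ fun u hu => ?_
  rcases lt_trichotomy (r u) 0 with hr | hr | hr
  · simp [hf u hu hr, hr.ne]
  · simp [hr]
  · simpa [hr.ne'] using
      (tendsto_exp_atBot.comp (tendsto_id.const_mul_atBot hr)).const_mul (f u)

theorem tendsto_exp_mul_expSum_atBot {f : ι → ℝ} {M : ι → ℤ} {N : ℤ}
    (hf : ∀ u ∈ S, M u < N → f u = 0) :
    Tendsto (fun s => exp (-(2 * N) * s) * expSum S f (fun u => 2 * M u) s) atBot
      (nhds (∑ u ∈ S with M u = N, f u)) := by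
  simp only [exp_mul_expSum]
  have hfilter : (S.filter fun u => M u = N) = S.filter fun u => 2 * (M u : ℝ) + -(2 * N) = 0 :=
    Finset.filter_congr fun u _ => by
      constructor
      · intro h; simp [h]
      · intro h; exact_mod_cast (by linarith : (M u : ℝ) = N)
  rw [hfilter]
  refine tendsto_expSum_atBot S fun u hu hr => hf u hu ?_
  exact_mod_cast (by linarith : (M u : ℝ) < N)

end ExpSum

theorem HasDerivAt.log_div {P Q : ℝ → ℝ} {P' Q' s : ℝ} (hP : HasDerivAt P P' s)
    (hQ : HasDerivAt Q Q' s) (hP0 : P s ≠ 0) (hQ0 : Q s ≠ 0) :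
    HasDerivAt (fun s => Real.log (P s / Q s)) (P' / P s - Q' / Q s) s :=
  ((hP.div hQ hQ0).log (div_ne_zero hP0 hQ0)).congr_deriv (by simp only [Pi.div_apply]; field_simp)

theorem Finset.sum_filter_and_one_le {ι : Type*} (S : Finset ι) {M : ι → ℤ}
    (hM : ∀ u ∈ S, 0 ≤ M u) (p : ι → Prop) [DecidablePred p] (g : ι → ℝ) :
    ∑ u ∈ S with p u ∧ 1 ≤ M u, (M u : ℝ) * g u = ∑ u ∈ S with p u, (M u : ℝ) * g u := by
  rw [← Finset.filter_filter]
  refine Finset.sum_filter_of_ne fun u hu hne => ?_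
  have : M u ≠ 0 := by rintro h; simp [h] at hne
  have := hM u (Finset.mem_filter.1 hu).1
  omega

theorem sum_erase_mul_sub_add_mul_sub {ι : Type*} [Fintype ι] [DecidableEq ι] (k : ι)
    (a y : ι → ℝ) (x z : ℝ) :
    ∑ i ∈ Finset.univ.erase k, a i * (x - y i) + a k * (x - z)
      = (∑ i, a i) * x - ∑ i ∈ Finset.univ.erase k, a i * y i - a k * z := by
  rw [← Finset.add_sum_erase _ a (Finset.mem_univ k)]
  simp only [mul_sub, Finset.sum_sub_distrib, ← Finset.sum_mul]
  ring

theorem xi_update {n : ℕ} (V : Fin n → Fin n → ℝ) (t : Fin n → ℝ) (k : Fin n) (s : ℝ) :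
    xi V (Function.update t k s) = xi V t + (s - t k) • V k := by
  have hupd : Function.update t k s = t + (s - t k) • Pi.single k 1 := by
    ext m
    rcases eq_or_ne m k with rfl | hm <;> simp [*]
  simp [xi, hupd, add_smul, Finset.sum_add_distrib, Pi.single_apply]

theorem hasDerivAt_xi_update {n : ℕ} (V : Fin n → Fin n → ℝ) (t : Fin n → ℝ) (k : Fin n)
    (s : ℝ) : HasDerivAt (fun s => xi V (Function.update t k s)) (V k) s := by
  simp only [xi_update]
  exact (((hasDerivAt_id' s).sub_const (t k)).smul_const (V k)).const_add _ |>.congr_deriv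
    (one_smul _ _)

theorem differentiableAt_gzero {n d : ℕ} (v : Fin d → Fin n → ℤ) (lam : Fin d → ℤ)
    (S : Finset (Fin n → ℤ)) (c : (Fin n → ℤ) → ℝ) (a : Fin d → ℤ) (x : Fin n → ℝ)
    (hN : ∀ i, ∑ u ∈ S, c u * (lfun v lam i u : ℝ) * exp (2 * ∑ m, (u m : ℝ) * x m) ≠ 0)
    (hD : ∑ u ∈ S, c u * exp (2 * ∑ m, (u m : ℝ) * x m) ≠ 0) :
    DifferentiableAt ℝ (gzero v lam S c a) x := by
  unfold gzero
  fun_prop (disch := first | exact hD | exact div_ne_zero (hN _) hD)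

section Line

variable {n d : ℕ} (v : Fin d → Fin n → ℤ) (lam : Fin d → ℤ) (hnd : n ≤ d)
  (S : Finset (Fin n → ℤ)) (c : (Fin n → ℤ) → ℝ) (k : Fin n) (t : Fin n → ℝ)

theorem sum_mul_xi (τ : Fin n → ℝ) (u : Fin n → ℤ) :
    ∑ m, (u m : ℝ) * xi (fun j p => (v (Fin.castLE hnd j) p : ℝ)) τ m
      = ∑ j, τ j * ((lfun v lam (Fin.castLE hnd j) u : ℝ) - lam (Fin.castLE hnd j)) := by
  simp only [xi, lfun, Finset.sum_apply, Pi.smul_apply, smul_eq_mul, Int.cast_add,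
    Int.cast_sum, Int.cast_mul, add_sub_cancel_right, Finset.mul_sum]
  rw [Finset.sum_comm]
  exact Finset.sum_congr rfl fun j _ => Finset.sum_congr rfl fun m _ => by ring

theorem mul_exp_xi_update (u : Fin n → ℤ) (s : ℝ) :
    c u * exp (2 * ∑ m, (u m : ℝ) *
        xi (fun j p => (v (Fin.castLE hnd j) p : ℝ)) (Function.update t k s) m)
      = exp (-2 * ∑ j, Function.update t k s j * lam (Fin.castLE hnd j)) *
        (bcoef v lam hnd c k t u * exp (2 * lfun v lam (Fin.castLE hnd k) u * s)) := by
  have hsplit : ∀ g : Fin n → ℝ, ∑ j, Function.update t k s j * g j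
      = s * g k + ∑ j ∈ Finset.univ.erase k, t j * g j := fun g => by
    rw [← Finset.add_sum_erase _ _ (Finset.mem_univ k), Function.update_self]
    congr 1
    exact Finset.sum_congr rfl fun j hj => by rw [Function.update_of_ne (Finset.ne_of_mem_erase hj)]
  rw [sum_mul_xi v lam hnd, bcoef, mul_left_comm, mul_assoc, ← exp_add, ← exp_add]
  congr 2
  simp only [mul_sub, Finset.sum_sub_distrib, hsplit, mul_comm (t _)]
  ring

def lineSum (f : (Fin n → ℤ) → ℝ) : ℝ → ℝ :=
  expSum S (fun u => f u * bcoef v lam hnd c k t u) (fun u => 2 * lfun v lam (Fin.castLE hnd k) u)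

local notation "L" => lineSum v lam hnd S c k t
local notation "ℓ" i:max u:max => ((lfun v lam i u : ℤ) : ℝ)
local notation "κ" => Fin.castLE hnd k

theorem bcoef_pos {u : Fin n → ℤ} (hu : 0 < c u) :
    0 < bcoef v lam hnd c k t u :=
  mul_pos hu (exp_pos _)

theorem hasDerivAt_lineSum (f : (Fin n → ℤ) → ℝ) (s : ℝ) :
    HasDerivAt (L f) (2 * L (fun u => ℓ κ u * f u) s) s := by
  refine (hasDerivAt_expSum S _ _ s).congr_deriv ?_
  simp only [lineSum, expSum, Finset.mul_sum]
  exact Finset.sum_congr rfl fun u _ => by ring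

theorem sum_mul_exp_xi_update (f : (Fin n → ℤ) → ℝ) (s : ℝ) :
    ∑ u ∈ S, c u * f u * exp (2 * ∑ m, (u m : ℝ) *
        xi (fun j p => (v (Fin.castLE hnd j) p : ℝ)) (Function.update t k s) m)
      = exp (-2 * ∑ j, Function.update t k s j * lam (Fin.castLE hnd j)) * L f s := by
  rw [lineSum, expSum, Finset.mul_sum]
  refine Finset.sum_congr rfl fun u _ => ?_
  rw [mul_right_comm, mul_exp_xi_update]
  ring

theorem sum_exp_xi_update (s : ℝ) :
    ∑ u ∈ S, c u * exp (2 * ∑ m, (u m : ℝ) *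
        xi (fun j p => (v (Fin.castLE hnd j) p : ℝ)) (Function.update t k s) m)
      = exp (-2 * ∑ j, Function.update t k s j * lam (Fin.castLE hnd j)) *
        L (fun _ => 1) s := by
  simpa using sum_mul_exp_xi_update v lam hnd S c k t (fun _ => 1) s

theorem gzero_xi_update (a : Fin d → ℤ) (s : ℝ) :
    gzero v lam S c a (xi (fun j p => (v (Fin.castLE hnd j) p : ℝ)) (Function.update t k s))
      = -(1 / 2) * ∑ i, (a i : ℝ) * log (L (fun u => ℓ i u) s / L (fun _ => 1) s) := by
  unfold gzero
  congr 1
  refine Finset.sum_congr rfl fun i _ => ?_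
  rw [sum_mul_exp_xi_update v lam hnd S c k t (fun u => ℓ i u) s,
    sum_exp_xi_update, mul_div_mul_left _ _ (exp_pos _).ne']

theorem pd1_gzero_xi_update (a : Fin d → ℤ) (s : ℝ) (hP : ∀ i, L (fun u => ℓ i u) s ≠ 0)
    (hQ : L (fun _ => 1) s ≠ 0) :
    pd1 (gzero v lam S c a)
        (xi (fun j p => (v (Fin.castLE hnd j) p : ℝ)) (Function.update t k s))
        (fun p => (v κ p : ℝ))
      = -∑ i, (a i : ℝ) *
          (L (fun u => ℓ κ u * ℓ i u) s / L (fun u => ℓ i u) s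
            - L (fun u => ℓ κ u) s / L (fun _ => 1) s) := by
  have hdiff : DifferentiableAt ℝ (gzero v lam S c a)
      (xi (fun j p => (v (Fin.castLE hnd j) p : ℝ)) (Function.update t k s)) := by
    refine differentiableAt_gzero v lam S c a _ (fun i => ?_) ?_
    · rw [sum_mul_exp_xi_update v lam hnd S c k t (fun u => ℓ i u)]
      exact mul_ne_zero (exp_pos _).ne' (hP i)
    · rw [sum_exp_xi_update]
      exact mul_ne_zero (exp_pos _).ne' hQ
  have hchain := hdiff.hasFDerivAt.comp_hasDerivAt s (hasDerivAt_xi_update _ t k s)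
  have hterm : ∀ i, HasDerivAt
      (fun s => (a i : ℝ) * Real.log (L (fun u => ℓ i u) s / L (fun _ => 1) s))
      ((a i : ℝ) * (2 * L (fun u => ℓ κ u * ℓ i u) s / L (fun u => ℓ i u) s
        - 2 * L (fun u => ℓ κ u * 1) s / L (fun _ => 1) s)) s := fun i =>
    ((hasDerivAt_lineSum v lam hnd S c k t _ s).log_div
      (hasDerivAt_lineSum v lam hnd S c k t _ s) (hP i) hQ).const_mul _
  have hline := (HasDerivAt.fun_sum (u := Finset.univ) fun i _ => hterm i).const_mul (-(1 / 2))
  refine hchain.unique ((hline.congr_of_eventuallyEq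
    (Eventually.of_forall fun s => gzero_xi_update v lam hnd S c k t a s)).congr_deriv ?_)
  simp only [mul_one, Finset.mul_sum, ← Finset.sum_neg_distrib]
  refine Finset.sum_congr rfl fun i _ => ?_
  ring

theorem lineSum_sub (f g : (Fin n → ℤ) → ℝ) (s : ℝ) :
    L f s - L g s = L (fun u => f u - g u) s := by
  simp only [lineSum, expSum, ← Finset.sum_sub_distrib]
  exact Finset.sum_congr rfl fun u _ => by ring

theorem tendsto_exp_mul_lineSum {f : (Fin n → ℤ) → ℝ} {N : ℤ}
    (hf : ∀ u ∈ S, lfun v lam κ u < N → f u = 0) :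
    Tendsto (fun s => exp (-(2 * N) * s) * L f s) atBot
      (nhds (∑ u ∈ S with lfun v lam κ u = N, f u * bcoef v lam hnd c k t u)) :=
  tendsto_exp_mul_expSum_atBot S fun u hu h => by simp [hf u hu h]

theorem tendsto_lineSum_atBot (f : (Fin n → ℤ) → ℝ) (hl : ∀ u ∈ S, 0 ≤ lfun v lam κ u) :
    Tendsto (L f) atBot
      (nhds (∑ u ∈ S with lfun v lam κ u = 0, f u * bcoef v lam hnd c k t u)) := by
  simpa using tendsto_exp_mul_lineSum v lam hnd S c k t (N := 0) (f := f)
    fun u hu h => absurd (hl u hu) (not_le.2 h)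

theorem tendsto_exp_mul_lineSum_lfun_mul (g : (Fin n → ℤ) → ℝ)
    (hl : ∀ u ∈ S, 0 ≤ lfun v lam κ u) :
    Tendsto (fun s => exp (-2 * s) * L (fun u => ℓ κ u * g u) s) atBot
      (nhds (∑ u ∈ S with lfun v lam κ u = 1, g u * bcoef v lam hnd c k t u)) := by
  have := tendsto_exp_mul_lineSum v lam hnd S c k t (N := 1) (f := fun u => ℓ κ u * g u)
    fun u hu h => by simp [show lfun v lam κ u = 0 by have := hl u hu; omega]
  convert this using 2
  · simp
  · exact Finset.sum_congr rfl fun u hu => by simp [(Finset.mem_filter.1 hu).2]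

theorem tendsto_exp_mul_lineSum_lfun_mul_sub (hl : ∀ u ∈ S, 0 ≤ lfun v lam κ u) :
    Tendsto (fun s => exp (-(2 * 2) * s) * L (fun u => ℓ κ u * ℓ κ u - ℓ κ u) s)
      atBot (nhds (2 * ∑ u ∈ S with lfun v lam κ u = 2, bcoef v lam hnd c k t u)) := by
  have := tendsto_exp_mul_lineSum v lam hnd S c k t (N := 2)
    (f := fun u => ℓ κ u * ℓ κ u - ℓ κ u) fun u hu h => by
      have : lfun v lam κ u = 0 ∨ lfun v lam κ u = 1 := by have := hl u hu; omega
      rcases this with h | h <;> simp [h]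
  convert this using 2
  · simp
  · rw [Finset.mul_sum]
    exact Finset.sum_congr rfl fun u hu => by rw [(Finset.mem_filter.1 hu).2]; norm_num

theorem exp_mul_pd1_gzero_add (a : Fin d → ℤ) (s : ℝ) (hP : ∀ i, L (fun u => ℓ i u) s ≠ 0)
    (hQ : L (fun _ => 1) s ≠ 0) :
    exp (-2 * s) * (pd1 (gzero v lam S c a)
        (xi (fun j p => (v (Fin.castLE hnd j) p : ℝ)) (Function.update t k s))
        (fun p => (v κ p : ℝ)) + a κ)
      = ∑ i ∈ Finset.univ.erase κ, (a i : ℝ) *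
          (exp (-2 * s) * L (fun u => ℓ κ u) s / L (fun _ => 1) s
            - exp (-2 * s) * L (fun u => ℓ κ u * ℓ i u) s / L (fun u => ℓ i u) s)
        + a κ * (exp (-2 * s) * L (fun u => ℓ κ u) s / L (fun _ => 1) s
            - exp (-(2 * 2) * s) * L (fun u => ℓ κ u * ℓ κ u - ℓ κ u) s
              / (exp (-2 * s) * L (fun u => ℓ κ u) s)) := by
  rw [pd1_gzero_xi_update v lam hnd S c k t a s hP hQ, ← lineSum_sub,
    ← Finset.add_sum_erase _ _ (Finset.mem_univ κ)]
  have hsum : ∑ i ∈ Finset.univ.erase κ, (a i : ℝ) *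
        (exp (-2 * s) * L (fun u => ℓ κ u) s / L (fun _ => 1) s
          - exp (-2 * s) * L (fun u => ℓ κ u * ℓ i u) s / L (fun u => ℓ i u) s)
      = exp (-2 * s) * -∑ i ∈ Finset.univ.erase κ, (a i : ℝ) *
          (L (fun u => ℓ κ u * ℓ i u) s / L (fun u => ℓ i u) s
            - L (fun u => ℓ κ u) s / L (fun _ => 1) s) := by
    rw [← Finset.sum_neg_distrib, Finset.mul_sum]
    exact Finset.sum_congr rfl fun i _ => by ring
  have hexp : exp (-(2 * 2) * s) = exp (-2 * s) * exp (-2 * s) := by rw [← exp_add]; ring_nf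
  have hPκ := hP κ
  rw [hsum, hexp]
  field_simp
  ring

theorem tendsto_exp_mul_pd1_gzero_add (a : Fin d → ℤ)
    (hl : ∀ i, ∀ u ∈ S, 0 ≤ lfun v lam i u)
    (hP : ∀ i s, L (fun u => ℓ i u) s ≠ 0) (hQ : ∀ s, L (fun _ => 1) s ≠ 0)
    (hQ₀ : ∑ u ∈ S with lfun v lam κ u = 0, bcoef v lam hnd c k t u ≠ 0)
    (hβ : ∑ u ∈ S with lfun v lam κ u = 1, bcoef v lam hnd c k t u ≠ 0)
    (hP₀ : ∀ i ≠ κ, ∑ u ∈ S with lfun v lam κ u = 0 ∧ 1 ≤ lfun v lam i u,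
      ℓ i u * bcoef v lam hnd c k t u ≠ 0) :
    Tendsto (fun s => exp (-2 * s) * (pd1 (gzero v lam S c a)
        (xi (fun j p => (v (Fin.castLE hnd j) p : ℝ)) (Function.update t k s))
        (fun p => (v κ p : ℝ)) + a κ)) atBot (nhds (limitValue v lam hnd S c a k t)) := by
  have hPlim : ∀ i, Tendsto (L (fun u => ℓ i u)) atBot
      (nhds (∑ u ∈ S with lfun v lam κ u = 0 ∧ 1 ≤ lfun v lam i u,
        ℓ i u * bcoef v lam hnd c k t u)) := fun i => by
    rw [Finset.sum_filter_and_one_le S (hl i)]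
    exact tendsto_lineSum_atBot v lam hnd S c k t _ (hl κ)
  have hAlim : ∀ i, Tendsto (fun s => exp (-2 * s) * L (fun u => ℓ κ u * ℓ i u) s) atBot
      (nhds (∑ u ∈ S with lfun v lam κ u = 1 ∧ 1 ≤ lfun v lam i u,
        ℓ i u * bcoef v lam hnd c k t u)) := fun i => by
    rw [Finset.sum_filter_and_one_le S (hl i)]
    exact tendsto_exp_mul_lineSum_lfun_mul v lam hnd S c k t _ (hl κ)
  have hQlim := tendsto_lineSum_atBot v lam hnd S c k t (fun _ => 1) (hl κ)
  have hBlim := tendsto_exp_mul_lineSum_lfun_mul v lam hnd S c k t (fun _ => 1) (hl κ)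
  simp only [one_mul, mul_one] at hQlim hBlim
  have hRlim := tendsto_exp_mul_lineSum_lfun_mul_sub v lam hnd S c k t (hl κ)
  have hlim := (tendsto_finsetSum (Finset.univ.erase κ) fun i hi =>
      ((hBlim.div hQlim hQ₀).sub
        ((hAlim i).div (hPlim i) (hP₀ i (Finset.ne_of_mem_erase hi)))).const_mul (a i : ℝ)).add (((hBlim.div hQlim hQ₀).sub (hRlim.div hBlim hβ)).const_mul (a κ : ℝ))
  rw [sum_erase_mul_sub_add_mul_sub] at hlim
  convert hlim using 2 with s
  · exact exp_mul_pd1_gzero_add v lam hnd S c k t a s (hP · s) (hQ s)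
  · rw [limitValue]
    ring

end Line

theorem exists_mem_one_le_lfun {n d : ℕ} {v : Fin d → Fin n → ℤ} {lam : Fin d → ℤ} {hnd : n ≤ d}
    {S : Finset (Fin n → ℤ)} {c : (Fin n → ℤ) → ℝ}
    (hu0 : ∃ u₀ ∈ S, 0 < c u₀ ∧
      (∀ j : Fin n, lfun v lam (Fin.castLE hnd j) u₀ = 0) ∧
      (∀ i : Fin d, n ≤ (i : ℕ) → 1 ≤ lfun v lam i u₀))
    (huk : ∀ k : Fin n, ∃ u ∈ S, 0 < c u ∧
      lfun v lam (Fin.castLE hnd k) u = 1 ∧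
      (∀ j : Fin n, j ≠ k → lfun v lam (Fin.castLE hnd j) u = 0))
    (i : Fin d) :
    ∃ u ∈ S, 0 < c u ∧ 1 ≤ lfun v lam i u ∧
      ∀ j : Fin n, Fin.castLE hnd j ≠ i → lfun v lam (Fin.castLE hnd j) u = 0 := by
  by_cases hi : (i : ℕ) < n
  · obtain ⟨u, hu, hcu, h1, h0⟩ := huk ⟨i, hi⟩
    have hcast : Fin.castLE hnd ⟨i, hi⟩ = i := Fin.ext rfl
    exact ⟨u, hu, hcu, hcast ▸ h1.ge, fun j hj => h0 j fun hji => hj (hji ▸ hcast)⟩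
  · obtain ⟨u₀, hu₀, hcu₀, h0, h1⟩ := hu0
    exact ⟨u₀, hu₀, hcu₀, h1 i (not_lt.1 hi), fun j _ => h0 j⟩

theorem gzero_first_derivative_limit_general (n d : ℕ) (hnd : n ≤ d)
    (v : Fin d → Fin n → ℤ) (lam : Fin d → ℤ)
    (S : Finset (Fin n → ℤ))
    (hS : ∀ u : Fin n → ℤ, u ∈ S ↔ ∀ i : Fin d, 0 ≤ lfun v lam i u)
    (c : (Fin n → ℤ) → ℝ) (hc : ∀ u ∈ S, 0 ≤ c u)
    (hu0 : ∃ u₀ ∈ S, 0 < c u₀ ∧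
      (∀ j : Fin n, lfun v lam (Fin.castLE hnd j) u₀ = 0) ∧
      (∀ i : Fin d, n ≤ (i : ℕ) → 1 ≤ lfun v lam i u₀))
    (huk : ∀ k : Fin n, ∃ u ∈ S, 0 < c u ∧
      lfun v lam (Fin.castLE hnd k) u = 1 ∧
      (∀ j : Fin n, j ≠ k → lfun v lam (Fin.castLE hnd j) u = 0))
    (a : Fin d → ℤ)
    (k : Fin n) (t : Fin n → ℝ) :
    Tendsto (fun s : ℝ =>
        Real.exp (-2 * s) *
          (pd1 (gzero v lam S c a)
              (xi (fun j p => (v (Fin.castLE hnd j) p : ℝ)) (Function.update t k s))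
              (fun p => (v (Fin.castLE hnd k) p : ℝ)) +
            (a (Fin.castLE hnd k) : ℝ)))
      atBot (nhds (limitValue v lam hnd S c a k t)) := by
  have hl : ∀ i, ∀ u ∈ S, 0 ≤ lfun v lam i u := fun i u hu => (hS u).1 hu i
  have hb : ∀ u ∈ S, 0 ≤ bcoef v lam hnd c k t u := fun u hu => mul_nonneg (hc u hu) (exp_pos _).le
  have hlb : ∀ i, ∀ u ∈ S, 0 ≤ (lfun v lam i u : ℝ) * bcoef v lam hnd c k t u :=
    fun i u hu => mul_nonneg (by exact_mod_cast hl i u hu) (hb u hu)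
  have hlb_pos : ∀ i u, 0 < c u → 1 ≤ lfun v lam i u →
      0 < (lfun v lam i u : ℝ) * bcoef v lam hnd c k t u :=
    fun i u hcu h1 => mul_pos (by exact_mod_cast h1) (bcoef_pos v lam hnd c k t hcu)
  have hwit := exists_mem_one_le_lfun hu0 huk
  obtain ⟨u₀, hu₀S, hu₀c, hu₀, -⟩ := hu0
  obtain ⟨uₖ, huₖS, huₖc, huₖ, -⟩ := huk k
  refine tendsto_exp_mul_pd1_gzero_add v lam hnd S c k t a hl (fun i s => ?_) (fun s => ?_) ?_ ?_
    (fun i hi => ?_)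
  · obtain ⟨u, hu, hcu, h1, -⟩ := hwit i
    exact (expSum_pos S _ s (hlb i) ⟨u, hu, hlb_pos i u hcu h1⟩).ne'
  · exact (expSum_pos S _ s (by simpa using hb)
      ⟨u₀, hu₀S, by simpa using bcoef_pos v lam hnd c k t hu₀c⟩).ne'
  · exact (Finset.sum_pos' (fun u hu => hb u (Finset.mem_filter.1 hu).1)
      ⟨u₀, Finset.mem_filter.2 ⟨hu₀S, hu₀ k⟩, bcoef_pos v lam hnd c k t hu₀c⟩).ne'
  · exact (Finset.sum_pos' (fun u hu => hb u (Finset.mem_filter.1 hu).1)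
      ⟨uₖ, Finset.mem_filter.2 ⟨huₖS, huₖ⟩, bcoef_pos v lam hnd c k t huₖc⟩).ne'
  · obtain ⟨u, hu, hcu, h1, h0⟩ := hwit i
    exact (Finset.sum_pos' (fun u hu => hlb i u (Finset.mem_filter.1 hu).1)
      ⟨u, Finset.mem_filter.2 ⟨hu, h0 k hi.symm, h1⟩, hlb_pos i u hcu h1⟩).ne'

/-- as `tₖ → −∞` (the other coordinates of `t` fixed), the function
`e^{−2tₖ}(⟨∇g₀(ξ(t)), vₖ⟩ + aₖ)` converges to the explicit limiting value. -/
theorem gzero_first_derivative_limit (n d : ℕ) (hnd : n ≤ d)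
    (v : Fin d → Fin n → ℤ) (lam : Fin d → ℤ)
    (S : Finset (Fin n → ℤ))
    (hS : ∀ u : Fin n → ℤ, u ∈ S ↔ ∀ i : Fin d, 0 ≤ lfun v lam i u)
    (hbdd : Bornology.IsBounded {x : Fin n → ℝ | ∀ i : Fin d, 0 ≤ lfunR v lam i x})
    (c : (Fin n → ℤ) → ℝ) (hc : ∀ u ∈ S, 0 ≤ c u)
    (hbasis : IsUnit (Matrix.of fun j k : Fin n => v (Fin.castLE hnd j) k).det)
    (hu0 : ∃ u₀ ∈ S, 0 < c u₀ ∧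
      (∀ j : Fin n, lfun v lam (Fin.castLE hnd j) u₀ = 0) ∧
      (∀ i : Fin d, n ≤ (i : ℕ) → 1 ≤ lfun v lam i u₀))
    (huk : ∀ k : Fin n, ∃ u ∈ S, 0 < c u ∧
      lfun v lam (Fin.castLE hnd k) u = 1 ∧
      (∀ j : Fin n, j ≠ k → lfun v lam (Fin.castLE hnd j) u = 0))
    (a : Fin d → ℤ)
    (k : Fin n) (t : Fin n → ℝ) :
    Tendsto (fun s : ℝ =>
        Real.exp (-2 * s) *
          (pd1 (gzero v lam S c a)
              (xi (fun j p => (v (Fin.castLE hnd j) p : ℝ)) (Function.update t k s))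
              (fun p => (v (Fin.castLE hnd k) p : ℝ)) +
            (a (Fin.castLE hnd k) : ℝ)))
      atBot (nhds (limitValue v lam hnd S c a k t)) :=
  gzero_first_derivative_limit_general n d hnd v lam S hS c hc hu0 huk a k t
end
end

section
/- Let v₁,…,vₙ be linearly independent vectors in ℝⁿ and let H : ℝⁿ → ℝ be a C² function satisfying the growth condition (∗) with data (v₁,…,vₙ; 0,…,0). Then for each k ∈ {1,…,n} and all fixed values of the coordinates of t other than tₖ, the function ⟨∇H(ξ(t)), vₖ⟩ tends to 0 as tₖ → −∞, where ξ(t) = t₁v₁ + … + tₙvₙ. -/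
open Filter

noncomputable section

/-- if `H` satisfies the growth condition (∗) with data `(v; 0)`, then for
each `k` and fixed remaining coordinates, `⟨∇H(ξ(t)), vₖ⟩ → 0` as `tₖ → −∞`. -/
theorem growth_condition_gradient_vanishes (n : ℕ)
    (v : Fin n → (Fin n → ℝ)) (hv : LinearIndependent ℝ v)
    (H : (Fin n → ℝ) → ℝ) (hHc : ContDiff ℝ 2 H)
    (hH : GrowthCondition v (fun _ => 0) H)
    (k : Fin n) (t : Fin n → ℝ) :
    Tendsto (fun s : ℝ => pd1 H (xi v (Function.update t k s)) (v k))
      atBot (nhds 0) := by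
  obtain ⟨L, h1, -⟩ := hH.1 k t
  have h2 : Tendsto (fun s : ℝ => Real.exp (2 * s) / 2) atBot (nhds 0) := by
    have : Tendsto (fun s : ℝ => 2 * s) atBot atBot := by
      apply Tendsto.const_mul_atBot two_pos tendsto_id
    simpa using (Real.tendsto_exp_atBot.comp this).div_const 2
  have key : (fun s : ℝ => pd1 H (xi v (Function.update t k s)) (v k)) =
      fun s : ℝ => (Real.exp (2 * s) / 2) *
        (2 * Real.exp (-2 * s) * (pd1 H (xi v (Function.update t k s)) (v k) + (0:ℝ))) := by
    funext s
    have h : Real.exp (2 * s) * Real.exp (-2 * s) = 1 := by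
      rw [← Real.exp_add, show (2 * s + -2 * s : ℝ) = 0 by ring, Real.exp_zero]
    linear_combination (-(pd1 H (xi v (Function.update t k s)) (v k))) * h
  rw [key]
  simpa using h2.mul h1
end
end
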